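/- Let F : T → S with right adjoint G, unit an isomorphism, between triangulated categories, with F and G exact. Then S admits a semiorthogonal decomposition ⟨Ker(G), Im(F)⟩: every object B of S sits in a distinguished triangle A₂ → B → A₁ → A₂[1] with A₂ in the essential image of F and A₁ in Ker(G), and Hom(A, K) = 0 for all A ∈ Im(F), K ∈ Ker(G). -/

import Mathlib

/-!
The counit `ε_B : F G B ⟶ B` becomes an isomorphism after applying `G`, because
`G ε_B ∘ η_{G B} = 1` and `η` is invertible. Completing `ε_B` to a distinguished triangle and
applying the exact functor `G` therefore kills its third vertex, which lies in `Ker G`.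
Orthogonality is pure adjunction: `Hom(F X, K) ≃ Hom(X, G K) = 0` when `G K = 0`.
-/

open CategoryTheory CategoryTheory.Limits CategoryTheory.Pretriangulated

namespace CategoryTheory

namespace Adjunction

variable {C D : Type*} [Category C] [Category D] {F : C ⥤ D} {G : D ⥤ C}

lemma isIso_map_counit_app_of_isIso_unit (adj : F ⊣ G) [IsIso adj.unit] (B : D) :
    IsIso (G.map (adj.counit.app B)) :=
  IsIso.of_isIso_fac_left (adj.right_triangle_components B)

lemma essImage_le_leftOrthogonal_kernel [HasZeroMorphisms C] [HasZeroMorphisms D]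
    (adj : F ⊣ G) :
    F.essImage ≤ G.kernel.leftOrthogonal := by
  have := adj.isLeftAdjoint
  rintro _ ⟨X, ⟨e⟩⟩
  refine ObjectProperty.prop_of_iso _ e fun K φ (hK : IsZero (G.obj K)) => ?_
  rw [← (adj.homEquiv X K).symm_apply_apply φ, hK.eq_of_tgt (adj.homEquiv X K φ) 0,
    homEquiv_counit, Functor.map_zero, zero_comp]

end Adjunction

lemma Functor.isZero_obj₃_of_isIso_map_mor₁ {C D : Type*} [Category C] [Category D]
    [HasZeroObject C] [HasZeroObject D] [Preadditive C] [Preadditive D]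
    [HasShift C ℤ] [HasShift D ℤ]
    [∀ n : ℤ, (shiftFunctor C n).Additive] [∀ n : ℤ, (shiftFunctor D n).Additive]
    [Pretriangulated C] [Pretriangulated D]
    (G : C ⥤ D) [G.CommShift ℤ] [G.IsTriangulated] {T : Triangle C} (hT : T ∈ distTriang C)
    (h : IsIso (G.map T.mor₁)) : IsZero (G.obj T.obj₃) :=
  (G.mapTriangle.obj T).isZero₃_of_isIso₁ (G.map_distinguished T hT) h

end CategoryTheory

/-- Bondal's lemma: if `F ⊣ G` is an adjunction of exact functors between triangulated
categories whose unit is an isomorphism, then `S = ⟨Ker G, Im F⟩` is a semiorthogonal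
decomposition: every object `B` of `S` sits in a distinguished triangle
`A₂ ⟶ B ⟶ A₁ ⟶ A₂⟦1⟧` with `A₂ ∈ Im F` and `A₁ ∈ Ker G`, and every morphism from an
object of `Im F` to an object of `Ker G` vanishes. -/
theorem semiorthogonal_decomposition_of_unit_isIso
    {T S : Type*} [Category T] [Category S]
    [HasZeroObject T] [HasZeroObject S] [Preadditive T] [Preadditive S]
    [HasShift T ℤ] [HasShift S ℤ]
    [∀ n : ℤ, (CategoryTheory.shiftFunctor T n).Additive]
    [∀ n : ℤ, (CategoryTheory.shiftFunctor S n).Additive]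
    [Pretriangulated T] [Pretriangulated S]
    (F : T ⥤ S) (G : S ⥤ T) [F.CommShift ℤ] [G.CommShift ℤ]
    [F.IsTriangulated] [G.IsTriangulated]
    (adj : F ⊣ G) (h : IsIso adj.unit) :
    (∀ B : S, ∃ (A₂ A₁ : S) (f : A₂ ⟶ B) (g : B ⟶ A₁) (δ : A₁ ⟶ A₂⟦(1 : ℤ)⟧),
        Triangle.mk f g δ ∈ (distTriang S) ∧ F.essImage A₂ ∧ IsZero (G.obj A₁)) ∧
    (∀ (A K : S) (_ : F.essImage A) (_ : IsZero (G.obj K)) (φ : A ⟶ K), φ = 0) := by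
  refine ⟨fun B => ?_, fun A K hA hK φ => adj.essImage_le_leftOrthogonal_kernel A hA φ hK⟩
  obtain ⟨A₁, g, δ, hT⟩ := distinguished_cocone_triangle (adj.counit.app B)
  exact ⟨F.obj (G.obj B), A₁, adj.counit.app B, g, δ, hT, F.obj_mem_essImage _,
    G.isZero_obj₃_of_isIso_map_mor₁ hT (adj.isIso_map_counit_app_of_isIso_unit B)⟩
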